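/- Sufficient bound for the regularization parameter (Theorem 3.7): Assume uniform SOSC with constant γ > 0. Then for every δ ∈ (0, γ), the convexification recursion with parameter δ satisfies R̃_k(δ) ≻ 0 for all k = 0,…,N−1 and H̃_k(δ) ≻ 0 for all k = 0,…,N. -/

import Mathlib

open Matrix BigOperators Finset

/-- The Euclidean norm of a vector in `ℝ^n`. -/
noncomputable def evNorm {n : ℕ} (x : Fin n → ℝ) : ℝ :=
  ‖(EuclideanSpace.equiv (Fin n) ℝ).symm x‖

/-- Uniform SOSC with constant `γ`: the homogeneous quadratic objective dominates
`γ` times the squared Euclidean norm of the trajectory. -/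
def USOSC {nx nu : ℕ} (N : ℕ) (γ : ℝ)
    (A : ℕ → Matrix (Fin nx) (Fin nx) ℝ) (B : ℕ → Matrix (Fin nx) (Fin nu) ℝ)
    (Q : ℕ → Matrix (Fin nx) (Fin nx) ℝ) (R : ℕ → Matrix (Fin nu) (Fin nu) ℝ)
    (S : ℕ → Matrix (Fin nu) (Fin nx) ℝ) : Prop :=
  ∀ (p : ℕ → Fin nx → ℝ) (q : ℕ → Fin nu → ℝ),
    p 0 = 0 → (∀ k < N, p (k + 1) = A k *ᵥ p k + B k *ᵥ q k) →
    γ * ((∑ k ∈ range (N + 1), evNorm (p k) ^ 2) + ∑ k ∈ range N, evNorm (q k) ^ 2)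
      ≤ (∑ k ∈ range N,
          (p k ⬝ᵥ Q k *ᵥ p k + 2 * (q k ⬝ᵥ S k *ᵥ p k) + q k ⬝ᵥ R k *ᵥ q k))
        + p N ⬝ᵥ Q N *ᵥ p N

/-!
Backward dynamic programming. Closing the loop with the feedback `u = -R̃ₖ⁻¹ S̃ₖ x` from stage `k`
on and completing the square at every stage, the tail cost from `x` equals
`xᵀ Q̄ₖ x + δ ∑ ‖pⱼ‖²`: `Q̄ₖ` is a cost-to-go of the problem whose state weights are all lowered
by `δ I`. Knowing this at stage `k + 1`, take the trajectory that rests at `0` up to stage `k`,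
applies an input `v` there and then follows the closed loop from `Bₖ v`. Its cost is
`vᵀ R̃ₖ v + δ ∑ ‖pⱼ‖²`, while uniform SOSC bounds it below by `γ (‖v‖² + ∑ ‖pⱼ‖²)`; hence
`R̃ₖ ≻ 0` as soon as `δ < γ`. Finally `H̃ₖ` has the block `R̃ₖ ≻ 0` and Schur complement `δ I ≻ 0`.
-/

lemma evNorm_sq {n : ℕ} (x : Fin n → ℝ) : evNorm x ^ 2 = x ⬝ᵥ x := by
  rw [evNorm, EuclideanSpace.norm_eq, Real.sq_sqrt (by positivity)]
  simp [dotProduct, sq]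

lemma Matrix.dotProduct_transpose_mul_mul_mulVec {l m n α : Type*} [Fintype l] [Fintype m]
    [Fintype n] [CommSemiring α] (X : Matrix l m α) (Z : Matrix l l α) (Y : Matrix l n α)
    (x : m → α) (y : n → α) : x ⬝ᵥ (Xᵀ * Z * Y) *ᵥ y = (X *ᵥ x) ⬝ᵥ Z *ᵥ (Y *ᵥ y) := by
  rw [← mulVec_mulVec, ← mulVec_mulVec, dotProduct_mulVec, vecMul_transpose]

lemma Matrix.isSymm_transpose_mul_mul {m n α : Type*} [Fintype m] [CommSemiring α]
    (X : Matrix m n α) {Z : Matrix m m α} (hZ : Z.IsSymm) : (Xᵀ * Z * X).IsSymm := by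
  simp [IsSymm, transpose_mul, hZ.eq, Matrix.mul_assoc]

lemma Matrix.linear_add_quadratic_at_neg_inv_mulVec {m n α : Type*} [Fintype m] [Fintype n]
    [DecidableEq m] [CommRing α] {R : Matrix m m α} (hR : IsUnit R.det) (S : Matrix m n α)
    (z : n → α) :
    2 * (-(R⁻¹ *ᵥ (S *ᵥ z)) ⬝ᵥ S *ᵥ z) + -(R⁻¹ *ᵥ (S *ᵥ z)) ⬝ᵥ R *ᵥ -(R⁻¹ *ᵥ (S *ᵥ z))
      = -(z ⬝ᵥ (Sᵀ * R⁻¹ * S) *ᵥ z) := by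
  have hRR : R *ᵥ (R⁻¹ *ᵥ (S *ᵥ z)) = S *ᵥ z := by
    rw [mulVec_mulVec, mul_nonsing_inv R hR, one_mulVec]
  rw [mulVec_neg, hRR, dotProduct_transpose_mul_mul_mulVec, dotProduct_comm (S *ᵥ z)]
  simp only [neg_dotProduct, dotProduct_neg, neg_neg]
  ring

open scoped ComplexOrder in
theorem Matrix.PosDef.fromBlocks_of_schur₂₂ {m n 𝕜 : Type*} [Fintype m] [Fintype n]
    [DecidableEq n] [RCLike 𝕜] {A : Matrix m m 𝕜} (B : Matrix m n 𝕜) {D : Matrix n n 𝕜}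
    (hD : D.PosDef) (hS : (A - B * D⁻¹ * Bᴴ).PosDef) : (fromBlocks A B Bᴴ D).PosDef := by
  have := hD.isUnit.invertible
  refine posDef_iff_dotProduct_mulVec.mpr
    ⟨(IsHermitian.fromBlocks₂₂ A B hD.1).mpr hS.1, fun x hx => ?_⟩
  rw [← Sum.elim_comp_inl_inr x, dotProduct_mulVec, schur_complement_eq₂₂ A B _ _ hD.1,
    ← dotProduct_mulVec, ← dotProduct_mulVec]
  by_cases hx₁ : x ∘ Sum.inl = 0
  · have hx₂ : x ∘ Sum.inr ≠ 0 := fun hx₂ =>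
      hx (by ext (i | i); exacts [congrFun hx₁ i, congrFun hx₂ i])
    simpa [hx₁] using hD.dotProduct_mulVec_pos hx₂
  · exact add_pos_of_nonneg_of_pos (hD.posSemidef.dotProduct_mulVec_nonneg _)
      (hS.dotProduct_mulVec_pos hx₁)

lemma Matrix.posDef_fromBlocks_transpose_mul_inv_mul_add_smul {m n : Type*} [Fintype m]
    [Fintype n] [DecidableEq m] [DecidableEq n] {R : Matrix n n ℝ} (hR : R.PosDef)
    (S : Matrix n m ℝ) {δ : ℝ} (hδ : 0 < δ) :
    (fromBlocks (Sᵀ * R⁻¹ * S + δ • 1) Sᵀ S R).PosDef := by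
  have hSchur := PosDef.fromBlocks_of_schur₂₂ (A := Sᵀ * R⁻¹ * S + δ • 1) Sᵀ hR
    (by simpa [conjTranspose_eq_transpose_of_trivial] using PosDef.one.smul hδ)
  rwa [conjTranspose_eq_transpose_of_trivial, transpose_transpose] at hSchur

section LinearQuadratic

variable {nx nu : ℕ} (N : ℕ) (A : ℕ → Matrix (Fin nx) (Fin nx) ℝ)
  (B : ℕ → Matrix (Fin nx) (Fin nu) ℝ) (Q : ℕ → Matrix (Fin nx) (Fin nx) ℝ)
  (R : ℕ → Matrix (Fin nu) (Fin nu) ℝ) (S : ℕ → Matrix (Fin nu) (Fin nx) ℝ)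

def stageCost (k : ℕ) (x : Fin nx → ℝ) (u : Fin nu → ℝ) : ℝ :=
  x ⬝ᵥ Q k *ᵥ x + 2 * (u ⬝ᵥ S k *ᵥ x) + u ⬝ᵥ R k *ᵥ u

def tailCost (k : ℕ) (p : ℕ → Fin nx → ℝ) (q : ℕ → Fin nu → ℝ) : ℝ :=
  ∑ j ∈ Ico k N, stageCost Q R S j (p j) (q j) + p N ⬝ᵥ Q N *ᵥ p N

def IsTrajectoryFrom (k : ℕ) (p : ℕ → Fin nx → ℝ) (q : ℕ → Fin nu → ℝ) : Prop :=
  ∀ j, k ≤ j → j < N → p (j + 1) = A j *ᵥ p j + B j *ᵥ q j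

def AttainsCostToGo (δ : ℝ) (k : ℕ) (P : Matrix (Fin nx) (Fin nx) ℝ) : Prop :=
  ∀ z, ∃ p q, p k = z ∧ IsTrajectoryFrom N A B k p q ∧
    tailCost N Q R S k p q = z ⬝ᵥ P *ᵥ z + δ * ∑ j ∈ Ico k (N + 1), p j ⬝ᵥ p j

lemma stageCost_add_dotProduct_mulVec {P : Matrix (Fin nx) (Fin nx) ℝ} (hP : P.IsSymm) (k : ℕ)
    (z : Fin nx → ℝ) (u : Fin nu → ℝ) :
    stageCost Q R S k z u + (A k *ᵥ z + B k *ᵥ u) ⬝ᵥ P *ᵥ (A k *ᵥ z + B k *ᵥ u)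
      = z ⬝ᵥ (Q k + (A k)ᵀ * P * A k) *ᵥ z + 2 * (u ⬝ᵥ (S k + (B k)ᵀ * P * A k) *ᵥ z)
        + u ⬝ᵥ (R k + (B k)ᵀ * P * B k) *ᵥ u := by
  have hcross : (A k *ᵥ z) ⬝ᵥ P *ᵥ (B k *ᵥ u) = (B k *ᵥ u) ⬝ᵥ P *ᵥ (A k *ᵥ z) := by
    rw [dotProduct_mulVec, ← mulVec_transpose, hP.eq, dotProduct_comm]
  simp only [stageCost, add_mulVec, mulVec_add, dotProduct_add, add_dotProduct,
    dotProduct_transpose_mul_mul_mulVec]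
  linear_combination hcross

variable {N A B Q R S}

lemma IsTrajectoryFrom.update {k : ℕ} {p : ℕ → Fin nx → ℝ} {q : ℕ → Fin nu → ℝ}
    (h : IsTrajectoryFrom N A B (k + 1) p q) {z : Fin nx → ℝ} {u : Fin nu → ℝ}
    (hk : p (k + 1) = A k *ᵥ z + B k *ᵥ u) :
    IsTrajectoryFrom N A B k (Function.update p k z) (Function.update q k u) := by
  intro j hkj hjN
  rcases hkj.eq_or_lt with rfl | hkj
  · simpa using hk
  · simpa [Function.update_of_ne hkj.ne', Function.update_of_ne (hkj.trans j.lt_succ_self).ne']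
      using h j hkj hjN

lemma Finset.sum_Ico_update {M α : Type*} [AddCommMonoid M] (g : α → M) (p : ℕ → α) (z : α)
    {k n : ℕ} (hk : k < n) :
    ∑ j ∈ Ico k n, g (Function.update p k z j) = g z + ∑ j ∈ Ico (k + 1) n, g (p j) := by
  rw [sum_eq_sum_Ico_succ_bot hk, Function.update_self]
  congr 1
  exact sum_congr rfl fun j hj => by rw [Function.update_of_ne (by grind)]

lemma tailCost_update {k : ℕ} (hk : k < N) (p : ℕ → Fin nx → ℝ) (q : ℕ → Fin nu → ℝ)
    (z : Fin nx → ℝ) (u : Fin nu → ℝ) :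
    tailCost N Q R S k (Function.update p k z) (Function.update q k u)
      = stageCost Q R S k z u + tailCost N Q R S (k + 1) p q := by
  rw [tailCost, tailCost, sum_eq_sum_Ico_succ_bot hk, Function.update_self, Function.update_self,
    Function.update_of_ne hk.ne', add_assoc]
  congr 2
  exact sum_congr rfl fun j hj => by
    rw [Function.update_of_ne (by grind), Function.update_of_ne (by grind)]

lemma USOSC.mul_sum_le_tailCost {γ : ℝ} (h : USOSC N γ A B Q R S) {k : ℕ} (hk : k ≤ N)
    {p : ℕ → Fin nx → ℝ} {q : ℕ → Fin nu → ℝ} (hpq : IsTrajectoryFrom N A B k p q)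
    (hpk : p k = 0) :
    γ * (∑ j ∈ Ico k (N + 1), p j ⬝ᵥ p j + ∑ j ∈ Ico k N, q j ⬝ᵥ q j)
      ≤ tailCost N Q R S k p q := by
  set p' : ℕ → Fin nx → ℝ := fun j => if j < k then 0 else p j
  set q' : ℕ → Fin nu → ℝ := fun j => if j < k then 0 else q j
  have hp'0 : p' 0 = 0 := by
    rcases k.eq_zero_or_pos with rfl | hk0
    · simpa [p'] using hpk
    · simp [p', hk0]
  have hdyn : ∀ j < N, p' (j + 1) = A j *ᵥ p' j + B j *ᵥ q' j := by
    intro j hjN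
    rcases lt_or_ge j k with hjk | hkj
    · rcases (Nat.succ_le_of_lt hjk).eq_or_lt with hjk' | hjk'
      · rw [← hjk'] at hpk
        simp [p', q', hjk, hpk]
      · simp [p', q', hjk, hjk']
    · simpa [p', q', hkj.not_gt, (hkj.trans j.le_succ).not_gt] using hpq j hkj hjN
  have hprefix : ∀ n, k ≤ n → ∀ f : ℕ → (Fin nx → ℝ) → (Fin nu → ℝ) → ℝ, (∀ j, f j 0 0 = 0) →
      ∑ j ∈ range n, f j (p' j) (q' j) = ∑ j ∈ Ico k n, f j (p j) (q j) := by
    intro n hkn f hf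
    rw [← sum_subset (s₁ := Ico k n) (fun j hj => by grind) fun j _ hj => by grind]
    exact sum_congr rfl fun j hj => by grind
  have hp'N : p' N = p N := by simp [p', hk.not_gt]
  have hstage : ∑ j ∈ range N,
      (p' j ⬝ᵥ Q j *ᵥ p' j + 2 * (q' j ⬝ᵥ S j *ᵥ p' j) + q' j ⬝ᵥ R j *ᵥ q' j)
        = ∑ j ∈ Ico k N, stageCost Q R S j (p j) (q j) :=
    hprefix N hk (stageCost Q R S) fun j => by simp [stageCost]
  have := h p' q' hp'0 hdyn
  simp only [evNorm_sq, hstage, hp'N] at this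
  rwa [hprefix (N + 1) (by omega) (fun _ x _ => x ⬝ᵥ x) (by simp),
    hprefix N hk (fun _ _ u => u ⬝ᵥ u) (by simp)] at this

lemma attainsCostToGo_terminal (δ : ℝ) :
    AttainsCostToGo N A B Q R S δ N (Q N - δ • 1) := by
  intro z
  refine ⟨fun _ => z, 0, rfl, fun j hNj hjN => absurd hjN hNj.not_gt, ?_⟩
  simp [tailCost, sub_mulVec, smul_mulVec]

lemma AttainsCostToGo.posDef_add_transpose_mul_mul {γ δ : ℝ} (hγ : 0 < γ) (hδγ : δ ≤ γ)
    (h : USOSC N γ A B Q R S) {k : ℕ} (hk : k < N) (hRk : (R k).IsSymm)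
    {P : Matrix (Fin nx) (Fin nx) ℝ} (hP : P.IsSymm)
    (hatt : AttainsCostToGo N A B Q R S δ (k + 1) P) : (R k + (B k)ᵀ * P * B k).PosDef := by
  refine posDef_iff_dotProduct_mulVec.mpr
    ⟨isHermitian_iff_isSymm.mpr (hRk.add (isSymm_transpose_mul_mul _ hP)), fun v hv => ?_⟩
  obtain ⟨p, q, hpk, hpq, hcost⟩ := hatt (B k *ᵥ v)
  have hbound := h.mul_sum_le_tailCost hk.le (hpq.update (z := 0) (u := v) (by simp [hpk]))
    (by simp)
  have hquad := stageCost_add_dotProduct_mulVec A B Q R S hP k 0 v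
  rw [tailCost_update hk, hcost, sum_Ico_update (fun x => x ⬝ᵥ x) p 0 (by omega),
    sum_Ico_update (fun u => u ⬝ᵥ u) q v hk, dotProduct_zero, zero_add] at hbound
  simp only [mulVec_zero, zero_add, dotProduct_zero, mul_zero, add_zero] at hquad
  have hv : 0 < v ⬝ᵥ v := dotProduct_star_self_pos_iff.mpr hv
  have hp : 0 ≤ ∑ j ∈ Ico (k + 1) (N + 1), p j ⬝ᵥ p j :=
    sum_nonneg fun j _ => dotProduct_star_self_nonneg (p j)
  have hq : 0 ≤ ∑ j ∈ Ico (k + 1) N, q j ⬝ᵥ q j :=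
    sum_nonneg fun j _ => dotProduct_star_self_nonneg (q j)
  change 0 < v ⬝ᵥ _
  linarith [mul_pos hγ hv, mul_nonneg (sub_nonneg.2 hδγ) hp, mul_nonneg hγ.le hq]

lemma AttainsCostToGo.riccati_step {δ : ℝ} {k : ℕ} (hk : k < N) {P : Matrix (Fin nx) (Fin nx) ℝ}
    (hP : P.IsSymm) (hatt : AttainsCostToGo N A B Q R S δ (k + 1) P)
    {Rt : Matrix (Fin nu) (Fin nu) ℝ} {St : Matrix (Fin nu) (Fin nx) ℝ}
    (hRt : Rt = R k + (B k)ᵀ * P * B k) (hSt : St = S k + (B k)ᵀ * P * A k)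
    (hRt_det : IsUnit Rt.det) :
    AttainsCostToGo N A B Q R S δ k (Q k + (A k)ᵀ * P * A k - (Stᵀ * Rt⁻¹ * St + δ • 1)) := by
  intro z
  set u := -(Rt⁻¹ *ᵥ (St *ᵥ z))
  obtain ⟨p, q, hpk, hpq, hcost⟩ := hatt (A k *ᵥ z + B k *ᵥ u)
  refine ⟨Function.update p k z, Function.update q k u, Function.update_self .., hpq.update hpk, ?_⟩
  have hquad := stageCost_add_dotProduct_mulVec A B Q R S hP k z u
  have hmin := linear_add_quadratic_at_neg_inv_mulVec hRt_det St z
  rw [← hRt, ← hSt] at hquad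
  rw [tailCost_update hk, hcost, sum_Ico_update (fun x => x ⬝ᵥ x) p z (by omega)]
  simp only [sub_mulVec, add_mulVec, dotProduct_sub, dotProduct_add, smul_mulVec, one_mulVec,
    dotProduct_smul, smul_eq_mul] at hquad ⊢
  linarith

end LinearQuadratic

theorem convexification_sufficient_delta_general
    (N nx nu : ℕ)
    (γ δ : ℝ) (hγ : 0 < γ) (hδ0 : 0 < δ) (hδγ : δ < γ)
    (A : ℕ → Matrix (Fin nx) (Fin nx) ℝ) (B : ℕ → Matrix (Fin nx) (Fin nu) ℝ)
    (Q : ℕ → Matrix (Fin nx) (Fin nx) ℝ) (R : ℕ → Matrix (Fin nu) (Fin nu) ℝ)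
    (S : ℕ → Matrix (Fin nu) (Fin nx) ℝ)
    (hQsymm : ∀ k ≤ N, (Q k).IsSymm) (hRsymm : ∀ k < N, (R k).IsSymm)
    (husosc : USOSC N γ A B Q R S)
    (Qbar : ℕ → Matrix (Fin nx) (Fin nx) ℝ) (Rt : ℕ → Matrix (Fin nu) (Fin nu) ℝ)
    (St : ℕ → Matrix (Fin nu) (Fin nx) ℝ) (Qt : ℕ → Matrix (Fin nx) (Fin nx) ℝ)
    (Ht : ℕ → Matrix (Fin nx ⊕ Fin nu) (Fin nx ⊕ Fin nu) ℝ)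
    (hQbarN : Qbar N = Q N - δ • (1 : Matrix (Fin nx) (Fin nx) ℝ))
    (hRt : ∀ k < N, Rt k = R k + (B k)ᵀ * Qbar (k + 1) * B k)
    (hSt : ∀ k < N, St k = S k + (B k)ᵀ * Qbar (k + 1) * A k)
    (hQt : ∀ k < N, Qt k = (St k)ᵀ * (Rt k)⁻¹ * St k
      + δ • (1 : Matrix (Fin nx) (Fin nx) ℝ))
    (hQbar : ∀ k < N, Qbar k = Q k + (A k)ᵀ * Qbar (k + 1) * A k - Qt k)
    (hHt : ∀ k < N, Ht k = Matrix.fromBlocks (Qt k) (St k)ᵀ (St k) (Rt k))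
    (hHtN : Ht N = δ • (1 : Matrix (Fin nx ⊕ Fin nu) (Fin nx ⊕ Fin nu) ℝ)) :
    (∀ k < N, (Rt k).PosDef) ∧ (∀ k ≤ N, (Ht k).PosDef) := by
  have hRt_posDef_of : ∀ k < N,
      (Qbar (k + 1)).IsSymm ∧ AttainsCostToGo N A B Q R S δ (k + 1) (Qbar (k + 1)) →
        (Rt k).PosDef :=
    fun k hk ih =>
      hRt k hk ▸ ih.2.posDef_add_transpose_mul_mul hγ hδγ.le husosc hk (hRsymm k hk) ih.1
  have hQbar_attains : ∀ k ≤ N, (Qbar k).IsSymm ∧ AttainsCostToGo N A B Q R S δ k (Qbar k) := by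
    intro k hk
    induction hk using Nat.decreasingInduction with
    | self =>
      rw [hQbarN]
      exact ⟨(hQsymm N le_rfl).sub (isSymm_one.smul δ), attainsCostToGo_terminal δ⟩
    | of_succ k hk ih =>
      have hR := hRt_posDef_of k hk ih
      have hR_symm : (Rt k).IsSymm := isHermitian_iff_isSymm.mp hR.isHermitian
      rw [hQbar k hk, hQt k hk]
      exact ⟨((hQsymm k hk.le).add (isSymm_transpose_mul_mul _ ih.1)).sub
          ((isSymm_transpose_mul_mul _ hR_symm.inv).add (isSymm_one.smul δ)),
        ih.2.riccati_step hk ih.1 (hRt k hk) (hSt k hk) hR.det_pos.ne'.isUnit⟩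
  have hRt_posDef : ∀ k < N, (Rt k).PosDef := fun k hk =>
    hRt_posDef_of k hk (hQbar_attains (k + 1) hk)
  refine ⟨hRt_posDef, fun k hk => ?_⟩
  rcases hk.lt_or_eq with hk | rfl
  · rw [hHt k hk, hQt k hk]
    exact posDef_fromBlocks_transpose_mul_inv_mul_add_smul (hRt_posDef k hk) (St k) hδ0
  · rw [hHtN]
    exact PosDef.one.smul hδ0

/-- **Sufficient bound for the regularization parameter (Theorem 3.7).**  Under uniform
SOSC with constant `γ > 0`, for every `δ ∈ (0, γ)` the convexification recursion yields
`R̃_k(δ) ≻ 0` for all `k < N` and `H̃_k(δ) ≻ 0` for all `k ≤ N`. -/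
theorem convexification_sufficient_delta
    (N nx nu : ℕ) (hN : 1 ≤ N) (hnx : 1 ≤ nx) (hnu : 1 ≤ nu)
    (γ δ : ℝ) (hγ : 0 < γ) (hδ0 : 0 < δ) (hδγ : δ < γ)
    (A : ℕ → Matrix (Fin nx) (Fin nx) ℝ) (B : ℕ → Matrix (Fin nx) (Fin nu) ℝ)
    (Q : ℕ → Matrix (Fin nx) (Fin nx) ℝ) (R : ℕ → Matrix (Fin nu) (Fin nu) ℝ)
    (S : ℕ → Matrix (Fin nu) (Fin nx) ℝ)
    (hQsymm : ∀ k ≤ N, (Q k).IsSymm) (hRsymm : ∀ k < N, (R k).IsSymm)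
    (husosc : USOSC N γ A B Q R S)
    (Qbar : ℕ → Matrix (Fin nx) (Fin nx) ℝ) (Rt : ℕ → Matrix (Fin nu) (Fin nu) ℝ)
    (St : ℕ → Matrix (Fin nu) (Fin nx) ℝ) (Qt : ℕ → Matrix (Fin nx) (Fin nx) ℝ)
    (Ht : ℕ → Matrix (Fin nx ⊕ Fin nu) (Fin nx ⊕ Fin nu) ℝ)
    (hQbarN : Qbar N = Q N - δ • (1 : Matrix (Fin nx) (Fin nx) ℝ))
    (hRt : ∀ k < N, Rt k = R k + (B k)ᵀ * Qbar (k + 1) * B k)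
    (hSt : ∀ k < N, St k = S k + (B k)ᵀ * Qbar (k + 1) * A k)
    (hQt : ∀ k < N, Qt k = (St k)ᵀ * (Rt k)⁻¹ * St k
      + δ • (1 : Matrix (Fin nx) (Fin nx) ℝ))
    (hQbar : ∀ k < N, Qbar k = Q k + (A k)ᵀ * Qbar (k + 1) * A k - Qt k)
    (hHt : ∀ k < N, Ht k = Matrix.fromBlocks (Qt k) (St k)ᵀ (St k) (Rt k))
    (hHtN : Ht N = δ • (1 : Matrix (Fin nx ⊕ Fin nu) (Fin nx ⊕ Fin nu) ℝ)) :
    (∀ k < N, (Rt k).PosDef) ∧ (∀ k ≤ N, (Ht k).PosDef) :=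
  convexification_sufficient_delta_general N nx nu γ δ hγ hδ0 hδγ A B Q R S hQsymm hRsymm husosc
    Qbar Rt St Qt Ht hQbarN hRt hSt hQt hQbar hHt hHtN
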